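/- Let f : ℝⁿ → ℝ be a C¹ function, c ∈ ℝ and u₀ ∈ S^{n-1} a unit vector. Let A be an n×n real diagonal matrix whose diagonal entries are positive and pairwise distinct, and assume that neither Au₀/‖Au₀‖ nor −Au₀/‖Au₀‖ belongs to V(u₀). Then there exist γ ∈ (0,1), R > 0, ε > 0 and η > 0 such that for every x ∈ ℝⁿ with ∇f(x) ≠ 0, ‖x‖ > R, |f(x) − c| < ε and ‖x/‖x‖ − u₀‖ < η, one has |⟨Ax/‖Ax‖, ∇f(x)/‖∇f(x)‖⟩| < γ. -/

import Mathlib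

/-!
Positive scaling does not change `y / ‖y‖`, so `Ax/‖Ax‖` depends only on `x/‖x‖`
and tends to `w = Au₀/‖Au₀‖` as `x/‖x‖ → u₀`. Hence, along the limit process
defining `V(u₀)`, every cluster point of the pair `(Ax/‖Ax‖, ∇f(x)/‖∇f(x)‖)` is
`(w, ν)` with `ν ∈ V(u₀)`, so `ν ≠ ±w` and `|⟨w, ν⟩| < 1` by the equality case of
Cauchy–Schwarz. The cluster points form a compact set, on which `|⟨·, ·⟩|` stays
below some `γ < 1`, and the pair eventually enters the open set where `|⟨·, ·⟩| < γ`.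
-/

open Filter Topology
open scoped RealInnerProductSpace

/-- The action of an `n × n` real matrix on Euclidean space `ℝⁿ`. -/
noncomputable def matApply {n : ℕ} (A : Matrix (Fin n) (Fin n) ℝ)
    (x : EuclideanSpace ℝ (Fin n)) : EuclideanSpace ℝ (Fin n) :=
  (EuclideanSpace.equiv (Fin n) ℝ).symm (A.mulVec (EuclideanSpace.equiv (Fin n) ℝ x))

/-- The set `V(u)`: unit vectors `ν` which are limits of normalised gradients
`∇f(x_k)/‖∇f(x_k)‖` along sequences with `‖x_k‖ → ∞`, `x_k/‖x_k‖ → u` and `f(x_k) → c`. -/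
def limGradDirs {n : ℕ} (f : EuclideanSpace ℝ (Fin n) → ℝ) (c : ℝ)
    (u : EuclideanSpace ℝ (Fin n)) : Set (EuclideanSpace ℝ (Fin n)) :=
  {ν | ‖ν‖ = 1 ∧ ∃ x : ℕ → EuclideanSpace ℝ (Fin n),
    (∀ k, gradient f (x k) ≠ 0) ∧
    Tendsto (fun k => ‖x k‖) atTop atTop ∧
    Tendsto (fun k => (‖x k‖)⁻¹ • x k) atTop (𝓝 u) ∧
    Tendsto (fun k => f (x k)) atTop (𝓝 c) ∧
    Tendsto (fun k => (‖gradient f (x k)‖)⁻¹ • gradient f (x k)) atTop (𝓝 ν)}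

open Metric

lemma norm_inv_norm_smul_le_one {E : Type*} [NormedAddCommGroup E] [NormedSpace ℝ E] (y : E) :
    ‖‖y‖⁻¹ • y‖ ≤ 1 := by
  rcases eq_or_ne y 0 with rfl | hy
  · simp
  · exact (norm_smul_inv_norm hy).le

lemma inv_norm_smul_smul_of_pos {E : Type*} [NormedAddCommGroup E] [NormedSpace ℝ E]
    {t : ℝ} (ht : 0 < t) (y : E) : ‖t • y‖⁻¹ • (t • y) = ‖y‖⁻¹ • y := by
  rw [norm_smul, Real.norm_of_nonneg ht.le, smul_smul]
  congr 1
  field_simp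

theorem MapClusterPt.eq_of_tendsto {α X : Type*} [TopologicalSpace X] [T2Space X] {F : Filter α}
    {u : α → X} {x y : X} (hx : MapClusterPt x F u) (hu : Tendsto u F (𝓝 y)) : x = y := by
  by_contra hne
  exact (ClusterPt.mono hx hu).ne (disjoint_iff.1 (disjoint_nhds_nhds.2 hne))

theorem IsCompact.exists_lt_forall_lt_of_forall_lt {X : Type*} [TopologicalSpace X] {C : Set X}
    (hC : IsCompact C) {φ : X → ℝ} (hφ : ContinuousOn φ C) {b : ℝ} (h : ∀ x ∈ C, φ x < b) :
    ∃ γ < b, ∀ x ∈ C, φ x < γ := by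
  rcases C.eq_empty_or_nonempty with rfl | hne
  · exact ⟨b - 1, by linarith, by simp⟩
  obtain ⟨x₀, hx₀, hmax⟩ := hC.exists_isMaxOn hne hφ
  obtain ⟨γ, hγ, hγb⟩ := exists_between (h x₀ hx₀)
  exact ⟨γ, hγb, fun x hx => (hmax hx).trans_lt hγ⟩

theorem IsCompact.exists_lt_eventually_lt_of_mapClusterPt {α X : Type*} [TopologicalSpace X]
    {K : Set X} (hK : IsCompact K) {F : Filter α} {g : α → X} (hgK : ∀ᶠ a in F, g a ∈ K)
    {φ : X → ℝ} (hφ : Continuous φ) {b : ℝ} (h : ∀ x ∈ K, MapClusterPt x F g → φ x < b) :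
    ∃ γ < b, ∀ᶠ a in F, φ (g a) < γ := by
  obtain ⟨γ, hγb, hγ⟩ := (hK.inter_right isClosed_setOfPred_clusterPt
    ).exists_lt_forall_lt_of_forall_lt hφ.continuousOn fun x hx => h x hx.1 hx.2
  refine ⟨γ, hγb, ?_⟩
  have hU : IsOpen {x | φ x < γ} := isOpen_lt hφ continuous_const
  exact (hK.tendsto_nhdsSet_of_mapClusterPt hgK fun x hx hc => hγ x ⟨hx, hc⟩).eventually_mem
    (hU.mem_nhdsSet.2 subset_rfl)

lemma abs_real_inner_lt_one_of_ne_of_ne_neg {E : Type*} [NormedAddCommGroup E]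
    [InnerProductSpace ℝ E] {x y : E} (hx : ‖x‖ = 1) (hy : ‖y‖ = 1) (hxy : y ≠ x)
    (hxy' : y ≠ -x) : |⟪x, y⟫| < 1 := by
  have hle := abs_real_inner_le_norm x y
  rw [hx, hy, one_mul] at hle
  refine hle.lt_of_ne fun h => ?_
  rcases abs_eq zero_le_one |>.1 h with h | h
  · exact hxy ((inner_eq_one_iff_of_norm_eq_one hx hy).1 h).symm
  · exact hxy' (neg_eq_iff_eq_neg.1 ((inner_eq_neg_one_iff_of_norm_eq_one hx hy).1 h).symm)

theorem tendsto_inv_norm_smul_map {E F : Type*} [NormedAddCommGroup E] [NormedSpace ℝ E]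
    [NormedAddCommGroup F] [NormedSpace ℝ F] (T : E →L[ℝ] F) {u : E} (hTu : T u ≠ 0) :
    Tendsto (fun x => ‖T x‖⁻¹ • T x) (comap (fun x => ‖x‖⁻¹ • x) (𝓝 u))
      (𝓝 (‖T u‖⁻¹ • T u)) := by
  have hcont : ContinuousAt (fun y => ‖T y‖⁻¹ • T y) u :=
    (T.continuous.norm.continuousAt.inv₀ (norm_ne_zero_iff.2 hTu)).smul T.continuous.continuousAt
  refine (hcont.tendsto.comp tendsto_comap).congr fun x => ?_
  rcases eq_or_ne x 0 with rfl | hx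
  · simp
  · simp only [Function.comp, map_smul, inv_norm_smul_smul_of_pos (inv_pos.2 (norm_pos_iff.2 hx))]

lemma toEuclideanCLM_diagonal_ne_zero {ι : Type*} [Fintype ι] [DecidableEq ι] {d : ι → ℝ}
    (hd : ∀ i, d i ≠ 0) {u : EuclideanSpace ℝ ι} (hu : u ≠ 0) :
    Matrix.toEuclideanCLM (𝕜 := ℝ) (Matrix.diagonal d) u ≠ 0 := by
  contrapose! hu
  ext i
  simpa [Matrix.mulVec_diagonal, hd i] using congr_arg (· i) hu

lemma matApply_eq_toEuclideanCLM {n : ℕ} (A : Matrix (Fin n) (Fin n) ℝ) :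
    matApply A = Matrix.toEuclideanCLM (𝕜 := ℝ) A :=
  rfl

section limGradFilter

variable {E : Type*} [NormedAddCommGroup E] [InnerProductSpace ℝ E] [CompleteSpace E]

/-- The limit process in the definition of `V(u)`. -/
noncomputable def limGradFilter (f : E → ℝ) (c : ℝ) (u : E) : Filter E :=
  comap (‖·‖) atTop ⊓ comap (fun x => ‖x‖⁻¹ • x) (𝓝 u) ⊓ comap f (𝓝 c) ⊓
    𝓟 {x | gradient f x ≠ 0}

instance (f : E → ℝ) (c : ℝ) (u : E) : (limGradFilter f c u).IsCountablyGenerated := by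
  unfold limGradFilter
  infer_instance

theorem limGradFilter_le_comap (f : E → ℝ) (c : ℝ) (u : E) :
    limGradFilter f c u ≤ comap (fun x => ‖x‖⁻¹ • x) (𝓝 u) :=
  inf_le_left.trans (inf_le_left.trans inf_le_right)

theorem exists_forall_of_eventually_limGradFilter {f : E → ℝ} {c : ℝ} {u : E} {p : E → Prop}
    (h : ∀ᶠ x in limGradFilter f c u, p x) :
    ∃ R > (0:ℝ), ∃ ε > (0:ℝ), ∃ η > (0:ℝ), ∀ x, gradient f x ≠ 0 → R < ‖x‖ →
      |f x - c| < ε → ‖‖x‖⁻¹ • x - u‖ < η → p x := by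
  obtain ⟨⟨⟨R, η⟩, ε⟩, ⟨⟨hR, hη⟩, hε⟩, hsub⟩ :=
    ((((atTop_basis_Ioi' 0).comap _).inf (nhds_basis_ball.comap _)).inf
      (nhds_basis_ball.comap f)).inf_principal _ |>.eventually_iff.1 h
  exact ⟨R, hR, ε, hε, η, hη, fun x hg hxR hfx hxu =>
    hsub ⟨⟨⟨hxR, mem_ball_iff_norm.2 hxu⟩, by simpa [Real.dist_eq] using hfx⟩, hg⟩⟩

end limGradFilter

theorem mem_limGradDirs_of_mapClusterPt {n : ℕ} {f : EuclideanSpace ℝ (Fin n) → ℝ} {c : ℝ}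
    {u ν : EuclideanSpace ℝ (Fin n)}
    (hν : MapClusterPt ν (limGradFilter f c u) fun x => ‖gradient f x‖⁻¹ • gradient f x) :
    ν ∈ limGradDirs f c u := by
  obtain ⟨ψ, hψν, hψ⟩ := hν.exists_seq_tendsto
  obtain ⟨N, hN⟩ := eventually_atTop.1 (tendsto_principal.1 (hψ.mono_right inf_le_right))
  have hgrad : ∀ k, gradient f (ψ (k + N)) ≠ 0 := fun k => hN _ le_add_self
  have hshift := tendsto_add_atTop_nat N
  simp only [limGradFilter, tendsto_inf, tendsto_comap_iff] at hψ
  obtain ⟨⟨⟨hnorm, hdir⟩, hval⟩, -⟩ := hψ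
  refine ⟨?_, fun k => ψ (k + N), hgrad, hnorm.comp hshift, hdir.comp hshift, hval.comp hshift,
    hψν.comp hshift⟩
  exact tendsto_nhds_unique (hψν.comp hshift).norm
    (tendsto_const_nhds.congr fun k => (norm_smul_inv_norm (hgrad k)).symm)

theorem abs_inner_lt_one_of_mapClusterPt {n : ℕ} {f : EuclideanSpace ℝ (Fin n) → ℝ} {c : ℝ}
    {u : EuclideanSpace ℝ (Fin n)} (T : EuclideanSpace ℝ (Fin n) →L[ℝ] EuclideanSpace ℝ (Fin n))
    (hTu : T u ≠ 0)
    (hV : ‖T u‖⁻¹ • T u ∉ limGradDirs f c u ∧ -(‖T u‖⁻¹ • T u) ∉ limGradDirs f c u)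
    {p ν : EuclideanSpace ℝ (Fin n)}
    (hp : MapClusterPt (p, ν) (limGradFilter f c u)
      fun x => (‖T x‖⁻¹ • T x, ‖gradient f x‖⁻¹ • gradient f x)) :
    |⟪p, ν⟫| < 1 := by
  have hTw := (tendsto_inv_norm_smul_map T hTu).mono_left (limGradFilter_le_comap f c u)
  obtain rfl : p = ‖T u‖⁻¹ • T u :=
    (hp.continuousAt_comp continuous_fst.continuousAt).eq_of_tendsto hTw
  have hν : MapClusterPt ν (limGradFilter f c u) fun x => ‖gradient f x‖⁻¹ • gradient f x :=
    hp.continuousAt_comp (f := Prod.snd) continuous_snd.continuousAt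
  have hνV := mem_limGradDirs_of_mapClusterPt hν
  exact abs_real_inner_lt_one_of_ne_of_ne_neg (norm_smul_inv_norm hTu) hνV.1
    (fun h => hV.1 (h ▸ hνV)) fun h => hV.2 (h ▸ hνV)

theorem statement9_general {n : ℕ} (f : EuclideanSpace ℝ (Fin n) → ℝ)
    (c : ℝ) (u₀ : EuclideanSpace ℝ (Fin n)) (hu₀ : ‖u₀‖ = 1)
    (dvec : Fin n → ℝ) (hpos : ∀ i, 0 < dvec i)
    (hV : (‖matApply (Matrix.diagonal dvec) u₀‖)⁻¹ • matApply (Matrix.diagonal dvec) u₀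
            ∉ limGradDirs f c u₀ ∧
          -((‖matApply (Matrix.diagonal dvec) u₀‖)⁻¹ • matApply (Matrix.diagonal dvec) u₀)
            ∉ limGradDirs f c u₀) :
    ∃ γ ∈ Set.Ioo (0:ℝ) 1, ∃ R > (0:ℝ), ∃ ε > (0:ℝ), ∃ η > (0:ℝ),
      ∀ x : EuclideanSpace ℝ (Fin n), gradient f x ≠ 0 → R < ‖x‖ → |f x - c| < ε →
        ‖(‖x‖)⁻¹ • x - u₀‖ < η →
        |⟪(‖matApply (Matrix.diagonal dvec) x‖)⁻¹ • matApply (Matrix.diagonal dvec) x,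
           (‖gradient f x‖)⁻¹ • gradient f x⟫| < γ := by
  rw [matApply_eq_toEuclideanCLM] at hV ⊢
  set T := Matrix.toEuclideanCLM (𝕜 := ℝ) (Matrix.diagonal dvec)
  have hTu : T u₀ ≠ 0 := toEuclideanCLM_diagonal_ne_zero (fun i => (hpos i).ne')
    (norm_ne_zero_iff.1 (hu₀ ▸ one_ne_zero))
  set B := closedBall (0 : EuclideanSpace ℝ (Fin n)) 1
  obtain ⟨γ, hγ1, hγ⟩ := ((isCompact_closedBall _ _).prod (isCompact_closedBall _ _) :
    IsCompact (B ×ˢ B)).exists_lt_eventually_lt_of_mapClusterPt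
    (Eventually.of_forall fun x => ⟨mem_closedBall_zero_iff.2 (norm_inv_norm_smul_le_one _),
      mem_closedBall_zero_iff.2 (norm_inv_norm_smul_le_one _)⟩)
    (by fun_prop) fun p _ hp => abs_inner_lt_one_of_mapClusterPt T hTu hV hp
  obtain ⟨R, hR, ε, hε, η, hη, hx⟩ := exists_forall_of_eventually_limGradFilter hγ
  exact ⟨max γ 2⁻¹, ⟨by positivity, max_lt hγ1 (by norm_num)⟩, R, hR, ε, hε, η, hη,
    fun x h₁ h₂ h₃ h₄ => (hx x h₁ h₂ h₃ h₄).trans_le (le_max_left _ _)⟩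

/-- Let `f : ℝⁿ → ℝ` be `C¹`, `c ∈ ℝ`, `u₀` a unit vector, and `A` a diagonal matrix with
positive, pairwise distinct diagonal entries such that neither `Au₀/‖Au₀‖` nor
`−Au₀/‖Au₀‖` belongs to `V(u₀)`.  Then there exist `γ ∈ (0,1)`, `R > 0`, `ε > 0`, `η > 0`
such that `|⟨Ax/‖Ax‖, ∇f(x)/‖∇f(x)‖⟩| < γ` whenever `∇f(x) ≠ 0`, `‖x‖ > R`,
`|f(x) − c| < ε` and `‖x/‖x‖ − u₀‖ < η`. -/
theorem statement9 {n : ℕ} (f : EuclideanSpace ℝ (Fin n) → ℝ) (hf : ContDiff ℝ 1 f)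
    (c : ℝ) (u₀ : EuclideanSpace ℝ (Fin n)) (hu₀ : ‖u₀‖ = 1)
    (dvec : Fin n → ℝ) (hpos : ∀ i, 0 < dvec i) (hinj : Function.Injective dvec)
    (hV : (‖matApply (Matrix.diagonal dvec) u₀‖)⁻¹ • matApply (Matrix.diagonal dvec) u₀
            ∉ limGradDirs f c u₀ ∧
          -((‖matApply (Matrix.diagonal dvec) u₀‖)⁻¹ • matApply (Matrix.diagonal dvec) u₀)
            ∉ limGradDirs f c u₀) :
    ∃ γ ∈ Set.Ioo (0:ℝ) 1, ∃ R > (0:ℝ), ∃ ε > (0:ℝ), ∃ η > (0:ℝ),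
      ∀ x : EuclideanSpace ℝ (Fin n), gradient f x ≠ 0 → R < ‖x‖ → |f x - c| < ε →
        ‖(‖x‖)⁻¹ • x - u₀‖ < η →
        |⟪(‖matApply (Matrix.diagonal dvec) x‖)⁻¹ • matApply (Matrix.diagonal dvec) x,
           (‖gradient f x‖)⁻¹ • gradient f x⟫| < γ :=
  statement9_general f c u₀ hu₀ dvec hpos hV
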